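/- arXiv:1808.03543 — 7 statements merged into one kernel-verified Lean document; each statement's English description precedes it below -/
import Mathlib

section
/- In any UP-algebra A, (x · (y · z)) · (x · ((a · y) · (a · z))) = 0 for all a, x, y, z ∈ A. -/
theorem mul_mul_eq_of_mul_eq {A : Type*} (m : A → A → A) (e : A)
    (up1 : ∀ x y z : A, m (m y z) (m (m x y) (m x z)) = e) (up2 : ∀ x : A, m e x = x)
    {y z : A} (h : m y z = e) (x : A) : m (m x y) (m x z) = e := by
  simpa only [h, up2] using up1 x y z

theorem stmt_6_general {A : Type*} (m : A → A → A) (e : A)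
    (up1 : ∀ x y z : A, m (m y z) (m (m x y) (m x z)) = e)
    (up2 : ∀ x : A, m e x = x) :
    ∀ a x y z : A, m (m x (m y z)) (m x (m (m a y) (m a z))) = e :=
  fun a x y z => mul_mul_eq_of_mul_eq m e up1 up2 (up1 a y z) x

theorem stmt_6 {A : Type*} (m : A → A → A) (e : A)
    (up1 : ∀ x y z : A, m (m y z) (m (m x y) (m x z)) = e)
    (up2 : ∀ x : A, m e x = x)
    (up3 : ∀ x : A, m x e = e)
    (up4 : ∀ x y : A, m x y = e → m y x = e → x = y) :
    ∀ a x y z : A, m (m x (m y z)) (m x (m (m a y) (m a z))) = e :=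
  stmt_6_general m e up1 up2
end

section
/- In any UP-algebra A, (((a · x) · (a · y)) · z) · ((x · y) · z) = 0 for all a, x, y, z ∈ A. -/
theorem up_mul_right_antitone {A : Type*} (m : A → A → A) (e : A)
    (up1 : ∀ x y z : A, m (m y z) (m (m x y) (m x z)) = e)
    (up2 : ∀ x : A, m e x = x) {x y : A} (hxy : m x y = e) (z : A) :
    m (m y z) (m x z) = e := by
  simpa only [hxy, up2] using up1 x y z

theorem stmt_7_general {A : Type*} (m : A → A → A) (e : A)
    (up1 : ∀ x y z : A, m (m y z) (m (m x y) (m x z)) = e)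
    (up2 : ∀ x : A, m e x = x) :
    ∀ a x y z : A, m (m (m (m a x) (m a y)) z) (m (m x y) z) = e :=
  fun a x y z => up_mul_right_antitone m e up1 up2 (up1 a x y) z

theorem stmt_7 {A : Type*} (m : A → A → A) (e : A)
    (up1 : ∀ x y z : A, m (m y z) (m (m x y) (m x z)) = e)
    (up2 : ∀ x : A, m e x = x)
    (up3 : ∀ x : A, m x e = e)
    (up4 : ∀ x y : A, m x y = e → m y x = e → x = y) :
    ∀ a x y z : A, m (m (m (m a x) (m a y)) z) (m (m x y) z) = e :=
  stmt_7_general m e up1 up2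
end

section
/- In any UP-algebra A, ((x · y) · z) · (y · z) = 0 for all x, y, z ∈ A. -/
theorem op_self_op_left_eq_zero {A : Type*} (m : A → A → A) (e : A)
    (up1 : ∀ x y z : A, m (m y z) (m (m x y) (m x z)) = e)
    (up2 : ∀ x : A, m e x = x) (up3 : ∀ x : A, m x e = e) (x y : A) :
    m y (m x y) = e := by
  simpa only [up3, up2] using up1 x e y

theorem stmt_8_general {A : Type*} (m : A → A → A) (e : A)
    (up1 : ∀ x y z : A, m (m y z) (m (m x y) (m x z)) = e)
    (up2 : ∀ x : A, m e x = x)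
    (up3 : ∀ x : A, m x e = e) :
    ∀ x y z : A, m (m (m x y) z) (m y z) = e := by
  intro x y z
  simpa only [op_self_op_left_eq_zero m e up1 up2 up3, up2] using up1 y (m x y) z

theorem stmt_8 {A : Type*} (m : A → A → A) (e : A)
    (up1 : ∀ x y z : A, m (m y z) (m (m x y) (m x z)) = e)
    (up2 : ∀ x : A, m e x = x)
    (up3 : ∀ x : A, m x e = e)
    (up4 : ∀ x y : A, m x y = e → m y x = e → x = y) :
    ∀ x y z : A, m (m (m x y) z) (m y z) = e :=
  stmt_8_general m e up1 up2 up3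
end

section
/- In any UP-algebra A, ((x · y) · z) · (x · (y · z)) = 0 for all x, y, z ∈ A. -/
/-! Write `a ≤ b` for `a · b = 0`. By (UP-1) this relation is transitive and makes `· z`
antitone, and `b ≤ a · b` always holds. Hence `(x · y) · z ≤ y · z` (from `y ≤ x · y`) and
`y · z ≤ x · (y · z)`, so `(x · y) · z ≤ x · (y · z)`. -/

namespace UPAlgebra

variable {A : Type*} {m : A → A → A} {e : A}

theorem mul_mul_right_eq (up1 : ∀ x y z : A, m (m y z) (m (m x y) (m x z)) = e)
    (up2 : ∀ x : A, m e x = x) {a b : A} (hba : m b a = e) (z : A) :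
    m (m a z) (m b z) = e := by
  simpa only [hba, up2] using up1 b a z

theorem mul_eq_trans (up1 : ∀ x y z : A, m (m y z) (m (m x y) (m x z)) = e)
    (up2 : ∀ x : A, m e x = x) {x y z : A} (hxy : m x y = e) (hyz : m y z = e) :
    m x z = e := by
  simpa only [hxy, hyz, up2] using up1 x y z

theorem mul_mul_left_eq (up1 : ∀ x y z : A, m (m y z) (m (m x y) (m x z)) = e)
    (up2 : ∀ x : A, m e x = x) (up3 : ∀ x : A, m x e = e) (a b : A) :
    m b (m a b) = e := by
  simpa only [up2, up3] using up1 a e b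

end UPAlgebra

theorem stmt_10_general {A : Type*} (m : A → A → A) (e : A)
    (up1 : ∀ x y z : A, m (m y z) (m (m x y) (m x z)) = e)
    (up2 : ∀ x : A, m e x = x)
    (up3 : ∀ x : A, m x e = e) :
    ∀ x y z : A, m (m (m x y) z) (m x (m y z)) = e := fun x y z =>
  UPAlgebra.mul_eq_trans up1 up2
    (UPAlgebra.mul_mul_right_eq up1 up2 (UPAlgebra.mul_mul_left_eq up1 up2 up3 x y) z)
    (UPAlgebra.mul_mul_left_eq up1 up2 up3 x (m y z))

theorem stmt_10 {A : Type*} (m : A → A → A) (e : A)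
    (up1 : ∀ x y z : A, m (m y z) (m (m x y) (m x z)) = e)
    (up2 : ∀ x : A, m e x = x)
    (up3 : ∀ x : A, m x e = e)
    (up4 : ∀ x y : A, m x y = e → m y x = e → x = y) :
    ∀ x y z : A, m (m (m x y) z) (m x (m y z)) = e :=
  stmt_10_general m e up1 up2 up3
end

section
/- In any UP-algebra A, ((x · y) · z) · (y · (a · z)) = 0 for all a, x, y, z ∈ A. -/
/-! Read `x · y = 0` as `x ≤ y`. By (UP-1) this relation is transitive, left multiplication is
monotone and right multiplication antitone, and `y ≤ x · y` always holds. Hence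
`(x · y) · z ≤ y · z ≤ y · (a · z)`. -/

section UPAlgebra

variable {A : Type*} (m : A → A → A) (e : A)

theorem up_le_trans (up1 : ∀ x y z : A, m (m y z) (m (m x y) (m x z)) = e)
    (up2 : ∀ x : A, m e x = x) {a b c : A} (hab : m a b = e) (hbc : m b c = e) :
    m a c = e := by
  simpa only [hab, hbc, up2] using up1 a b c

theorem up_mul_le_mul_left (up1 : ∀ x y z : A, m (m y z) (m (m x y) (m x z)) = e)
    (up2 : ∀ x : A, m e x = x) {y z : A} (h : m y z = e) (x : A) :
    m (m x y) (m x z) = e := by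
  simpa only [h, up2] using up1 x y z

theorem up_mul_le_mul_right (up1 : ∀ x y z : A, m (m y z) (m (m x y) (m x z)) = e)
    (up2 : ∀ x : A, m e x = x) {a b : A} (h : m a b = e) (z : A) :
    m (m b z) (m a z) = e := by
  simpa only [h, up2] using up1 a b z

theorem up_le_mul_left (up1 : ∀ x y z : A, m (m y z) (m (m x y) (m x z)) = e)
    (up2 : ∀ x : A, m e x = x) (up3 : ∀ x : A, m x e = e) (x y : A) :
    m y (m x y) = e := by
  simpa only [up2, up3] using up1 x e y

end UPAlgebra

theorem stmt_11_general {A : Type*} (m : A → A → A) (e : A)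
    (up1 : ∀ x y z : A, m (m y z) (m (m x y) (m x z)) = e)
    (up2 : ∀ x : A, m e x = x)
    (up3 : ∀ x : A, m x e = e) :
    ∀ a x y z : A, m (m (m x y) z) (m y (m a z)) = e := by
  intro a x y z
  have hxyz : m (m (m x y) z) (m y z) = e :=
    up_mul_le_mul_right m e up1 up2 (up_le_mul_left m e up1 up2 up3 x y) z
  have hyz : m (m y z) (m y (m a z)) = e :=
    up_mul_le_mul_left m e up1 up2 (up_le_mul_left m e up1 up2 up3 a z) y
  exact up_le_trans m e up1 up2 hxyz hyz

theorem stmt_11 {A : Type*} (m : A → A → A) (e : A)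
    (up1 : ∀ x y z : A, m (m y z) (m (m x y) (m x z)) = e)
    (up2 : ∀ x : A, m e x = x)
    (up3 : ∀ x : A, m x e = e)
    (up4 : ∀ x y : A, m x y = e → m y x = e → x = y) :
    ∀ a x y z : A, m (m (m x y) z) (m y (m a z)) = e :=
  stmt_11_general m e up1 up2 up3
end

section
/- Let A = (A, ·, ∗, 0) where (A, ·, 0) is a UP-algebra and ∗ is a binary operation on A. If · is right distributive over ∗, i.e., (x ∗ y) · z = (x · z) ∗ (y · z) for all x, y, z, then x ∗ x = x for all x ∈ A. -/
theorem stmt_18_general {A : Type*} (m : A → A → A) (e : A)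
    (up2 : ∀ x : A, m e x = x)
    (up3 : ∀ x : A, m x e = e)
    (s : A → A → A)
    (rd : ∀ x y z : A, m (s x y) z = s (m x z) (m y z)) :
    ∀ x : A, s x x = x := by
  have see : s e e = e := by
    calc s e e = s (m e e) (m e e) := by rw [up3]
      _ = m (s e e) e := (rd e e e).symm
      _ = e := up3 _
  intro x
  calc s x x = s (m e x) (m e x) := by rw [up2]
    _ = m (s e e) x := (rd e e x).symm
    _ = m e x := by rw [see]
    _ = x := up2 x

theorem stmt_18 {A : Type*} (m : A → A → A) (e : A)
    (up1 : ∀ x y z : A, m (m y z) (m (m x y) (m x z)) = e)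
    (up2 : ∀ x : A, m e x = x)
    (up3 : ∀ x : A, m x e = e)
    (up4 : ∀ x y : A, m x y = e → m y x = e → x = y)
    (s : A → A → A)
    (rd : ∀ x y z : A, m (s x y) z = s (m x z) (m y z)) :
    ∀ x : A, s x x = x :=
  stmt_18_general m e up2 up3 s rd
end

section
/- Let A = (A, ·, ∗, 0) where (A, ·, 0) is a UP-algebra and (A, ∗) is a semigroup. If · is right distributive over ∗ and ∗ is distributive on both sides over · (i.e., (x ∗ y) · z = (x · z) ∗ (y · z), x ∗ (y · z) = (x ∗ y) · (x ∗ z), and (x · y) ∗ z = (x ∗ z) · (y ∗ z) for all x, y, z), then A = {0}, i.e., every element equals 0. -/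
/-!
Both distributive laws of `∗` over `·` make `0` absorbing for `∗`, because `y · y = 0` (UP-1 at
`x = y = 0`) and `x ∗ (y · y) = (x ∗ y) · (x ∗ y) = 0`. Right distributivity of `·` over `∗` then gives
`x = 0 · x = (0 ∗ x) · x = (0 · x) ∗ (x · x) = x ∗ 0 = 0`.
-/

section
variable {A : Type*} {m s : A → A → A} {e : A}

theorem up_self_eq_zero (up1 : ∀ x y z : A, m (m y z) (m (m x y) (m x z)) = e)
    (up2 : ∀ x : A, m e x = x) (z : A) : m z z = e := by
  simpa only [up2] using up1 e e z

theorem star_zero_of_left_distrib (hzz : ∀ z : A, m z z = e)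
    (sld : ∀ x y z : A, s x (m y z) = m (s x y) (s x z)) (x : A) : s x e = e := by
  simpa only [hzz] using sld x e e

theorem zero_star_of_right_distrib (hzz : ∀ z : A, m z z = e)
    (srd : ∀ x y z : A, s (m x y) z = m (s x z) (s y z)) (x : A) : s e x = e := by
  simpa only [hzz] using srd e e x

end

theorem stmt_19_general {A : Type*} (m : A → A → A) (e : A)
    (up1 : ∀ x y z : A, m (m y z) (m (m x y) (m x z)) = e)
    (up2 : ∀ x : A, m e x = x)
    (s : A → A → A)
    (rd : ∀ x y z : A, m (s x y) z = s (m x z) (m y z))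
    (sld : ∀ x y z : A, s x (m y z) = m (s x y) (s x z))
    (srd : ∀ x y z : A, s (m x y) z = m (s x z) (s y z)) :
    ∀ x : A, x = e := by
  have hzz := up_self_eq_zero up1 up2
  intro x
  calc x = m e x := (up2 x).symm
    _ = m (s e x) x := by rw [zero_star_of_right_distrib hzz srd]
    _ = s (m e x) (m x x) := rd e x x
    _ = e := by rw [up2, hzz, star_zero_of_left_distrib hzz sld]

theorem stmt_19 {A : Type*} (m : A → A → A) (e : A)
    (up1 : ∀ x y z : A, m (m y z) (m (m x y) (m x z)) = e)
    (up2 : ∀ x : A, m e x = x)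
    (up3 : ∀ x : A, m x e = e)
    (up4 : ∀ x y : A, m x y = e → m y x = e → x = y)
    (s : A → A → A) (assoc : ∀ x y z : A, s (s x y) z = s x (s y z))
    (rd : ∀ x y z : A, m (s x y) z = s (m x z) (m y z))
    (sld : ∀ x y z : A, s x (m y z) = m (s x y) (s x z))
    (srd : ∀ x y z : A, s (m x y) z = m (s x z) (s y z)) :
    ∀ x : A, x = e :=
  stmt_19_general m e up1 up2 s rd sld srd
end
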